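/- The map σ₀ is a birational involution of ℙ²(ℂ) (there exists a nonzero homogeneous polynomial μ of degree 3 with σ₀ᵢ(σ₀(b)) = μ(b)·bᵢ for i = 0, 1, 2), and it lifts the twist β₀ × β₀ through Φ̃: the identity Φ̃ ∘ σ₀ = (β₀ × β₀) ∘ Φ̃ holds as rational maps ℙ² ⇢ ℙ¹×ℙ¹, i.e. writing Φ̃ = (Φ̃₁, Φ̃₂) in affine coordinates, Φ̃₁(σ₀(b)) = λ/Φ̃₁(b) and Φ̃₂(σ₀(b)) = λ/Φ̃₂(b) wherever both sides are defined. -/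

import Mathlib

/-- First affine coordinate of `Φ̃`. -/
noncomputable def Phi1 (t b₀ b₁ b₂ : ℂ) : ℂ := (b₁ * t - b₂) / (b₀ * t - b₁)

/-- Second affine coordinate of `Φ̃`. -/
noncomputable def Phi2 (l b₀ b₁ b₂ : ℂ) : ℂ :=
  -b₁ * (b₀ * l - b₁ * l - b₁ + b₂) / (b₁ ^ 2 - b₀ * b₂)

/-- First component of the involution `σ₀`. -/
noncomputable def sigma00 (l t b₀ b₁ b₂ : ℂ) : ℂ :=
  (l * b₀ + (-1 - l + t) * b₁) * (t * b₁ - b₂)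

/-- Second component of the involution `σ₀`. -/
noncomputable def sigma01 (l t b₀ b₁ b₂ : ℂ) : ℂ :=
  l * (t * b₀ - b₁) * (t * b₁ - b₂)

/-- Third component of the involution `σ₀`. -/
noncomputable def sigma02 (l t b₀ b₁ b₂ : ℂ) : ℂ :=
  l * (t * b₀ - b₁) * ((-l + t + l * t) * b₁ - t * b₂)

/-!
Both claims are polynomial identities once denominators are cleared. Composing `σ₀` with
itself multiplies every coordinate by the cubic
`μ = λ²(t-1)²(t-λ)² · b₁ (b₁ - t b₀)(b₂ - t b₁)`, which is a nonzero polynomial exactly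
because its constant factor is nonzero. For `Φ̃₁`, the numerator and the denominator of
`Φ̃₁ ∘ σ₀` are `λ(t b₀ - b₁)` and `t b₁ - b₂` times the common factor `b₁(t-1)(t-λ)`, which
gives `λ / Φ̃₁`; the identity for `Φ̃₂` is checked in the same way.
-/

open MvPolynomial

/-- The multiplier `μ` of `σ₀ ∘ σ₀ = μ · id`. -/
noncomputable def sigma0Mu (l t : ℂ) : MvPolynomial (Fin 3) ℂ :=
  C (l ^ 2 * (t - 1) ^ 2 * (t - l) ^ 2) * X 1 * (X 1 - C t * X 0) * (X 2 - C t * X 1)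

section Multiplier

variable (l t : ℂ)

lemma eval_sigma0Mu (b₀ b₁ b₂ : ℂ) :
    eval ![b₀, b₁, b₂] (sigma0Mu l t) =
      l ^ 2 * (t - 1) ^ 2 * (t - l) ^ 2 * b₁ * (b₁ - t * b₀) * (b₂ - t * b₁) := by
  simp [sigma0Mu]

lemma sigma0Mu_isHomogeneous : (sigma0Mu l t).IsHomogeneous 3 := by
  have hC : ∀ c : ℂ, (C c : MvPolynomial (Fin 3) ℂ).IsHomogeneous 0 := isHomogeneous_C _
  have hX : ∀ i : Fin 3, (X i : MvPolynomial (Fin 3) ℂ).IsHomogeneous 1 := isHomogeneous_X _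
  have hlin : ∀ i j : Fin 3, (X i - C t * X j : MvPolynomial (Fin 3) ℂ).IsHomogeneous 1 :=
    fun i j => (hX i).sub ((hC t).mul (hX j))
  exact (((hC _).mul (hX 1)).mul (hlin 1 0)).mul (hlin 2 1)

variable {l t}

lemma sigma0Mu_ne_zero (hl0 : l ≠ 0) (ht1 : t ≠ 1) (htl : t ≠ l) : sigma0Mu l t ≠ 0 := by
  intro h
  -- at `(0, 1, t + 1)` all three linear factors equal `1`
  have h' := congrArg (eval ![0, 1, t + 1]) h
  rw [eval_sigma0Mu, map_zero] at h'
  have hc : l ^ 2 * (t - 1) ^ 2 * (t - l) ^ 2 ≠ 0 := by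
    simp [hl0, sub_ne_zero.mpr ht1, sub_ne_zero.mpr htl]
  exact hc (by linear_combination h')

end Multiplier

section Involution

variable (l t b₀ b₁ b₂ : ℂ)

lemma sigma00_sigma0 :
    sigma00 l t (sigma00 l t b₀ b₁ b₂) (sigma01 l t b₀ b₁ b₂) (sigma02 l t b₀ b₁ b₂) =
      eval ![b₀, b₁, b₂] (sigma0Mu l t) * b₀ := by
  rw [eval_sigma0Mu]; simp only [sigma00, sigma01, sigma02]; ring

lemma sigma01_sigma0 :
    sigma01 l t (sigma00 l t b₀ b₁ b₂) (sigma01 l t b₀ b₁ b₂) (sigma02 l t b₀ b₁ b₂) =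
      eval ![b₀, b₁, b₂] (sigma0Mu l t) * b₁ := by
  rw [eval_sigma0Mu]; simp only [sigma00, sigma01, sigma02]; ring

lemma sigma02_sigma0 :
    sigma02 l t (sigma00 l t b₀ b₁ b₂) (sigma01 l t b₀ b₁ b₂) (sigma02 l t b₀ b₁ b₂) =
      eval ![b₀, b₁, b₂] (sigma0Mu l t) * b₂ := by
  rw [eval_sigma0Mu]; simp only [sigma00, sigma01, sigma02]; ring

end Involution

section Lift

variable {l t b₀ b₁ b₂ : ℂ}

lemma phi1_sigma0 (hden : b₁ * t - b₂ ≠ 0)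
    (hden' : sigma00 l t b₀ b₁ b₂ * t - sigma01 l t b₀ b₁ b₂ ≠ 0) :
    Phi1 t (sigma00 l t b₀ b₁ b₂) (sigma01 l t b₀ b₁ b₂) (sigma02 l t b₀ b₁ b₂) =
      l / Phi1 t b₀ b₁ b₂ := by
  rw [Phi1, Phi1, div_div_eq_mul_div, div_eq_div_iff hden' hden]
  simp only [sigma00, sigma01, sigma02]
  ring

lemma phi2_sigma0 (hnum : b₁ * (b₀ * l - b₁ * l - b₁ + b₂) ≠ 0)
    (hden' : sigma01 l t b₀ b₁ b₂ ^ 2 - sigma00 l t b₀ b₁ b₂ * sigma02 l t b₀ b₁ b₂ ≠ 0) :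
    Phi2 l (sigma00 l t b₀ b₁ b₂) (sigma01 l t b₀ b₁ b₂) (sigma02 l t b₀ b₁ b₂) =
      l / Phi2 l b₀ b₁ b₂ := by
  have hnum' : -b₁ * (b₀ * l - b₁ * l - b₁ + b₂) ≠ 0 := by rwa [neg_mul, neg_ne_zero]
  rw [Phi2, Phi2, div_div_eq_mul_div, div_eq_div_iff hden' hnum']
  simp only [sigma00, sigma01, sigma02]
  ring

end Lift

theorem sigma0_involution_lifts_beta0 (l t : ℂ) (hl0 : l ≠ 0)
    (ht1 : t ≠ 1) (htl : t ≠ l) :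
    (∃ μ : MvPolynomial (Fin 3) ℂ, μ ≠ 0 ∧ μ.IsHomogeneous 3 ∧
      ∀ b₀ b₁ b₂ : ℂ,
        sigma00 l t (sigma00 l t b₀ b₁ b₂) (sigma01 l t b₀ b₁ b₂) (sigma02 l t b₀ b₁ b₂) =
            MvPolynomial.eval ![b₀, b₁, b₂] μ * b₀ ∧
        sigma01 l t (sigma00 l t b₀ b₁ b₂) (sigma01 l t b₀ b₁ b₂) (sigma02 l t b₀ b₁ b₂) =
            MvPolynomial.eval ![b₀, b₁, b₂] μ * b₁ ∧
        sigma02 l t (sigma00 l t b₀ b₁ b₂) (sigma01 l t b₀ b₁ b₂) (sigma02 l t b₀ b₁ b₂) =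
            MvPolynomial.eval ![b₀, b₁, b₂] μ * b₂) ∧
    ∀ b₀ b₁ b₂ : ℂ,
      b₀ * t - b₁ ≠ 0 → b₁ * t - b₂ ≠ 0 →
      b₁ ^ 2 - b₀ * b₂ ≠ 0 → b₁ * (b₀ * l - b₁ * l - b₁ + b₂) ≠ 0 →
      sigma00 l t b₀ b₁ b₂ * t - sigma01 l t b₀ b₁ b₂ ≠ 0 →
      sigma01 l t b₀ b₁ b₂ ^ 2 - sigma00 l t b₀ b₁ b₂ * sigma02 l t b₀ b₁ b₂ ≠ 0 →
      Phi1 t (sigma00 l t b₀ b₁ b₂) (sigma01 l t b₀ b₁ b₂) (sigma02 l t b₀ b₁ b₂) =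
          l / Phi1 t b₀ b₁ b₂ ∧
      Phi2 l (sigma00 l t b₀ b₁ b₂) (sigma01 l t b₀ b₁ b₂) (sigma02 l t b₀ b₁ b₂) =
          l / Phi2 l b₀ b₁ b₂ :=
  ⟨⟨sigma0Mu l t, sigma0Mu_ne_zero hl0 ht1 htl, sigma0Mu_isHomogeneous l t,
      fun b₀ b₁ b₂ => ⟨sigma00_sigma0 l t b₀ b₁ b₂, sigma01_sigma0 l t b₀ b₁ b₂,
        sigma02_sigma0 l t b₀ b₁ b₂⟩⟩,
    fun _ _ _ _ h₁t _ h₂ h₁σ h₂σ => ⟨phi1_sigma0 h₁t h₁σ, phi2_sigma0 h₂ h₂σ⟩⟩
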